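/- (Tree convergence) Let G=(V,E) be a finite tree, B⊆V a subtree, and x_{∂B} any boundary configuration in {±1}^{∂B}. Then the difference messages m^n_{j→i} converge (are eventually constant in n), and the estimates ô^n_i = Σ_{j∈∂i} m^n_{j→i} converge to the local solution o*_i = O*_i(-1, x_{∂B}) - O*_i(+1, x_{∂B}), in a number of iterations equal to the diameter of the tree plus 1. -/

import Mathlib

set_option linter.unusedSectionVars false
set_option maxHeartbeats 1000000

variable {V : Type*} [Fintype V] [DecidableEq V]

/-- An edge is an odd bond for configuration `y` when its endpoints get different values. -/
def isOddE (y : V → ℤ) (e : Sym2 V) : Prop :=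
  Sym2.lift ⟨fun u v => y u ≠ y v, fun u v => by simp [ne_comm]⟩ e

/-- Number of odd bonds on edges with at least one endpoint in `B`. -/
noncomputable def oddBondsT (G : SimpleGraph V) (B : Finset V) (y : V → ℤ) : ℕ :=
  {e ∈ G.edgeSet | (∃ u ∈ e, u ∈ B) ∧ isOddE y e}.ncard

/-- `O*_i(s, x)`: minimal odd-bond count over configurations agreeing with `x` off `B`,
taking values in `{±1}` on `B`, and with value `s` at `i`. -/
noncomputable def OstarT (G : SimpleGraph V) (B : Finset V) (x : V → ℤ)
    (i : V) (s : ℤ) : ℕ :=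
  sInf {n | ∃ y : V → ℤ, (∀ v, v ∉ B → y v = x v) ∧ (∀ v ∈ B, y v = 1 ∨ y v = -1) ∧
    y i = s ∧ oddBondsT G B y = n}

open SimpleGraph Walk

section Aux

variable {G : SimpleGraph V}

noncomputable def upath (hG : G.IsTree) (u v : V) : G.Walk u v :=
  (hG.existsUnique_path u v).exists.choose

lemma upath_isPath (hG : G.IsTree) (u v : V) : (upath hG u v).IsPath :=
  (hG.existsUnique_path u v).exists.choose_spec

lemma eq_upath (hG : G.IsTree) {u v : V} (p : G.Walk u v) (hp : p.IsPath) :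
    p = upath hG u v := by
  obtain ⟨q, _, huniq⟩ := hG.existsUnique_path u v
  rw [huniq p hp, huniq _ (upath_isPath hG u v)]

lemma length_eq_dist (hG : G.IsTree) {u v : V} (p : G.Walk u v) (hp : p.IsPath) :
    p.length = G.dist u v := by
  obtain ⟨q, hq, hlen⟩ := hG.isConnected.exists_path_of_dist u v
  rw [eq_upath hG p hp, ← eq_upath hG q hq]
  exact hlen

lemma dist_add_of_mem (hG : G.IsTree) {u v a : V} (p : G.Walk u v) (hp : p.IsPath)
    (ha : a ∈ p.support) : G.dist u v = G.dist u a + G.dist a v := by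
  have hts := take_spec p ha
  rw [← length_eq_dist hG p hp, ← hts, length_append,
      length_eq_dist hG _ (hp.takeUntil ha), length_eq_dist hG _ (hp.dropUntil ha)]

lemma dist_dichotomy (hG : G.IsTree) {j i : V} (h : G.Adj j i) (v : V) :
    G.dist v i = G.dist v j + 1 ∨ G.dist v j = G.dist v i + 1 := by
  set p := upath hG v i with hp
  by_cases hj : j ∈ p.support
  · left
    have hd := dist_add_of_mem hG p (upath_isPath hG v i) hj
    rwa [dist_eq_one_iff_adj.mpr h] at hd
  · right
    have hq : (p.concat h.symm).IsPath := by
      rw [isPath_def, support_concat, ← List.concat_eq_append]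
      refine List.Nodup.concat hj ?_
      exact (upath_isPath hG v i).support_nodup
    have hl := length_eq_dist hG _ hq
    rw [length_concat, length_eq_dist hG p (upath_isPath hG v i)] at hl
    omega

def Br (G : SimpleGraph V) (k j : V) : Set V := {v | G.dist v k < G.dist v j}

lemma self_mem_Br {k j : V} (h : G.Adj k j) : k ∈ Br G k j := by
  simp only [Br, Set.mem_setOf_eq, SimpleGraph.dist_self]
  rw [dist_eq_one_iff_adj.mpr h]
  omega

lemma center_not_mem_Br {k j : V} : j ∉ Br G k j := by
  simp [Br, SimpleGraph.dist_self]

lemma mem_Br_iff (hG : G.IsTree) {k j : V} (h : G.Adj k j) {v : V} :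
    v ∈ Br G k j ↔ G.dist v j = G.dist v k + 1 := by
  constructor
  · intro hv
    rcases dist_dichotomy hG h v with h1 | h2
    · exact h1
    · exact absurd hv (by simp [Br]; omega)
  · intro hd
    simp [Br]; omega

lemma mem_Br_iff_mem_support (hG : G.IsTree) {k j : V} (h : G.Adj k j) {v : V} :
    v ∈ Br G k j ↔ k ∈ (upath hG v j).support := by
  constructor
  · intro hv
    have hd := (mem_Br_iff hG h).mp hv
    have hjns : j ∉ (upath hG v k).support := by
      intro hmem
      have := dist_add_of_mem hG _ (upath_isPath hG v k) hmem
      rw [dist_eq_one_iff_adj.mpr h.symm] at this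
      omega
    have hq : ((upath hG v k).concat h).IsPath := by
      rw [isPath_def, support_concat, ← List.concat_eq_append]
      exact List.Nodup.concat hjns (upath_isPath hG v k).support_nodup
    rw [← eq_upath hG _ hq, support_concat]
    simp only [List.concat_eq_append, List.mem_append, List.mem_singleton]
    exact Or.inl (end_mem_support _)
  · intro hk
    have hd := dist_add_of_mem hG _ (upath_isPath hG v j) hk
    rw [dist_eq_one_iff_adj.mpr h] at hd
    exact (mem_Br_iff hG h).mpr hd

lemma penult_eq (hG : G.IsTree) {v j k : V} (h : G.Adj k j)
    (hk : k ∈ (upath hG v j).support) :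
    (upath hG v j).getVert ((upath hG v j).length - 1) = k := by
  set p := upath hG v j with hpdef
  have hp : p.IsPath := upath_isPath hG v j
  have hts := take_spec p hk
  have hlt : (p.takeUntil k hk).length = (p.takeUntil k hk).length := rfl
  have hld : (p.dropUntil k hk).length = 1 := by
    rw [length_eq_dist hG _ (hp.dropUntil hk)]
    exact dist_eq_one_iff_adj.mpr h
  have hlen : p.length = (p.takeUntil k hk).length + 1 := by
    conv_lhs => rw [← hts]
    rw [length_append, hld]
  have key : ((p.takeUntil k hk).append (p.dropUntil k hk)).getVert
      ((p.takeUntil k hk).length) = k := by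
    rw [getVert_append]
    simp [getVert_zero]
  rw [hts] at key
  rw [hlen]
  simpa using key

lemma Br_disjoint (hG : G.IsTree) {k k' j v : V} (h : G.Adj k j) (h' : G.Adj k' j)
    (hv : v ∈ Br G k j) (hv' : v ∈ Br G k' j) : k = k' := by
  have h1 := penult_eq hG h ((mem_Br_iff_mem_support hG h).mp hv)
  have h2 := penult_eq hG h' ((mem_Br_iff_mem_support hG h').mp hv')
  rw [h1] at h2
  exact h2

lemma exists_branch (hG : G.IsTree) {v c : V} (hv : v ≠ c) :
    ∃ k, G.Adj k c ∧ v ∈ Br G k c := by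
  set p := upath hG v c with hpdef
  have hlen : p.length ≠ 0 := by
    intro h0
    exact hv (Walk.eq_of_length_eq_zero h0)
  refine ⟨p.getVert (p.length - 1), ?_, ?_⟩
  · have := p.adj_getVert_succ (i := p.length - 1) (by omega)
    rwa [show p.length - 1 + 1 = p.length by omega, getVert_length] at this
  · have hadj : G.Adj (p.getVert (p.length - 1)) c := by
      have := p.adj_getVert_succ (i := p.length - 1) (by omega)
      rwa [show p.length - 1 + 1 = p.length by omega, getVert_length] at this
    rw [mem_Br_iff_mem_support hG hadj]
    rw [Walk.mem_support_iff_exists_getVert]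
    exact ⟨p.length - 1, rfl, Nat.sub_le _ _⟩

lemma Br_subset (hG : G.IsTree) {k j k' : V} (hkj : G.Adj k j) (hk'k : G.Adj k' k)
    (hne : k' ≠ j) : Br G k' k ⊆ Br G k j := by
  intro v hv
  rcases dist_dichotomy hG hkj v with h1 | h2
  · exact (mem_Br_iff hG hkj).mpr h1
  · have hvj : v ∈ Br G j k := (mem_Br_iff hG hkj.symm).mpr h2
    exact absurd (Br_disjoint hG hkj.symm hk'k hvj hv) (Ne.symm hne)

def SK (G : SimpleGraph V) (c : V) (K : Finset V) : Set V := {v | ∃ k ∈ K, v ∈ Br G k c}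

lemma branch_decomp (hG : G.IsTree) [DecidableRel G.Adj] {k j : V} (hkj : G.Adj k j) :
    Br G k j = insert k (SK G k (G.neighborFinset k \ {j})) := by
  ext v
  constructor
  · intro hv
    by_cases hvk : v = k
    · exact hvk ▸ Set.mem_insert _ _
    · obtain ⟨k', hadj, hmem⟩ := exists_branch hG hvk
      refine Set.mem_insert_iff.mpr (Or.inr ⟨k', ?_, hmem⟩)
      have hk'j : k' ≠ j := by
        intro rfl'
        subst rfl'
        have := (mem_Br_iff hG hadj).mp hmem
        simp only [Br, Set.mem_setOf_eq] at hv
        omega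
      simp [Finset.mem_sdiff, mem_neighborFinset, hadj.symm, hk'j]
  · intro hv
    rcases Set.mem_insert_iff.mp hv with rfl | ⟨k', hk', hmem⟩
    · exact self_mem_Br hkj
    · rw [Finset.mem_sdiff, mem_neighborFinset, Finset.mem_singleton] at hk'
      exact Br_subset hG hkj hk'.1.symm hk'.2 hmem

lemma univ_decomp (hG : G.IsTree) [DecidableRel G.Adj] (c : V) :
    (Set.univ : Set V) = insert c (SK G c (G.neighborFinset c)) := by
  ext v
  simp only [Set.mem_univ, true_iff, Set.mem_insert_iff]
  by_cases hvc : v = c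
  · exact Or.inl hvc
  · obtain ⟨k, hadj, hmem⟩ := exists_branch hG hvc
    exact Or.inr ⟨k, by simp [mem_neighborFinset, hadj.symm], hmem⟩

lemma eq_of_adj_mem_Br (hG : G.IsTree) {w k c : V} (hkc : G.Adj k c) (hwc : G.Adj w c)
    (hw : w ∈ Br G k c) : w = k :=
  Br_disjoint hG hwc hkc (self_mem_Br hwc) hw

lemma edge_mem_Br (hG : G.IsTree) {u w k c : V} (huw : G.Adj u w) (hkc : G.Adj k c)
    (hu : u ∈ Br G k c) (hw : w ≠ c) : w ∈ Br G k c := by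
  have hu' := (mem_Br_iff hG hkc).mp hu
  have e1 : G.dist c w = G.dist w c := SimpleGraph.dist_comm
  have e2 : G.dist c u = G.dist u c := SimpleGraph.dist_comm
  have hd1 : G.dist u w = 1 := dist_eq_one_iff_adj.mpr huw
  have hd1' : G.dist w u = 1 := dist_eq_one_iff_adj.mpr huw.symm
  rcases dist_dichotomy hG huw (v := c) with h1 | h2
  · -- dist c w = dist c u + 1
    have t := hG.isConnected.dist_triangle (u := w) (v := u) (w := k)
    simp only [Br, Set.mem_setOf_eq]
    omega
  · -- dist c u = dist c w + 1
    have huns : u ∉ (upath hG w c).support := by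
      intro hmem
      have hadd := dist_add_of_mem hG _ (upath_isPath hG w c) hmem
      omega
    have hq : (Walk.cons huw (upath hG w c)).IsPath :=
      ((upath_isPath hG w c).cons huns)
    have hksup := (mem_Br_iff_mem_support hG hkc).mp hu
    rw [← eq_upath hG _ hq, support_cons] at hksup
    rcases List.mem_cons.mp hksup with rfl | hktail
    · -- k = u
      rw [SimpleGraph.dist_self] at hu'
      have hz : G.dist w c = 0 := by omega
      exact absurd (hG.isConnected.dist_eq_zero_iff.mp hz) hw
    · have hadd := dist_add_of_mem hG _ (upath_isPath hG w c) hktail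
      rw [dist_eq_one_iff_adj.mpr hkc] at hadd
      exact (mem_Br_iff hG hkc).mpr hadd

/-! ### Edge sets and costs -/

def ESet (G : SimpleGraph V) (B : Finset V) (S : Set V) (y : V → ℤ) : Set (Sym2 V) :=
  {e | e ∈ G.edgeSet ∧ (∃ u ∈ e, u ∈ B) ∧ (∀ u ∈ e, u ∈ S) ∧ isOddE y e}

noncomputable def cost (G : SimpleGraph V) (B : Finset V) (S : Set V) (y : V → ℤ) : ℕ :=
  (ESet G B S y).ncard

lemma mem_ESet_iff {B : Finset V} {S : Set V} {y : V → ℤ} {u w : V} :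
    s(u, w) ∈ ESet G B S y ↔
      G.Adj u w ∧ (u ∈ B ∨ w ∈ B) ∧ (u ∈ S ∧ w ∈ S) ∧ y u ≠ y w := by
  simp [ESet, isOddE, Sym2.mem_iff]
  tauto

lemma cost_congr {B : Finset V} {S : Set V} {y y' : V → ℤ}
    (h : ∀ v ∈ S, y v = y' v) : cost G B S y = cost G B S y' := by
  unfold cost
  congr 1
  ext e
  induction e using Sym2.ind with
  | _ u w =>
    rw [mem_ESet_iff, mem_ESet_iff]
    constructor <;> rintro ⟨h1, h2, ⟨hu, hw⟩, h4⟩ <;>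
      exact ⟨h1, h2, ⟨hu, hw⟩, by rw [← h u hu, ← h w hw] at *; exact h4⟩

lemma cost_eq_zero_of_not_B {B : Finset V} {S : Set V} {y : V → ℤ}
    (h : ∀ v ∈ S, v ∉ B) : cost G B S y = 0 := by
  unfold cost
  rw [Set.ncard_eq_zero (Set.toFinite _)]
  ext e
  induction e using Sym2.ind with
  | _ u w =>
    simp only [Set.mem_empty_iff_false, iff_false]
    rw [mem_ESet_iff]
    rintro ⟨h1, h2, ⟨hu, hw⟩, h4⟩
    rcases h2 with h2 | h2
    · exact h u hu h2
    · exact h w hw h2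

lemma cost_singleton {B : Finset V} {c : V} {y : V → ℤ} : cost G B {c} y = 0 := by
  unfold cost
  rw [Set.ncard_eq_zero (Set.toFinite _)]
  ext e
  induction e using Sym2.ind with
  | _ u w =>
    simp only [Set.mem_empty_iff_false, iff_false]
    rw [mem_ESet_iff]
    rintro ⟨h1, h2, ⟨hu, hw⟩, h4⟩
    rw [Set.mem_singleton_iff] at hu hw
    subst hu; subst hw
    exact G.irrefl h1

lemma not_mem_S_of_mem_Br (hG : G.IsTree) {c k₀ : V} (hk₀ : G.Adj k₀ c) {K : Finset V}
    (hK : ∀ k ∈ K, G.Adj k c) (hk₀K : k₀ ∉ K) {v : V}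
    (hv : v ∈ Br G k₀ c) : v ∉ insert c (SK G c K) := by
  intro hmem
  rcases Set.mem_insert_iff.mp hmem with rfl | ⟨k', hk', hmem'⟩
  · exact center_not_mem_Br hv
  · exact hk₀K ((Br_disjoint hG (hK k' hk') hk₀ hmem' hv) ▸ hk')

lemma CP (hG : G.IsTree) {B : Finset V} {c k₀ : V} (hc : c ∈ B) (hk₀ : G.Adj k₀ c)
    (K : Finset V) (hK : ∀ k ∈ K, G.Adj k c) (hk₀K : k₀ ∉ K) (y : V → ℤ) :
    cost G B (insert c (SK G c (insert k₀ K))) y =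
      cost G B (insert c (SK G c K)) y + cost G B (Br G k₀ c) y +
        (if y c = y k₀ then 0 else 1) := by
  set S : Set V := insert c (SK G c K) with hS
  have hreg : insert c (SK G c (insert k₀ K)) = S ∪ Br G k₀ c := by
    ext v
    simp only [hS, SK, Set.mem_insert_iff, Set.mem_union, Set.mem_setOf_eq,
      Finset.mem_insert]
    constructor
    · rintro (rfl | ⟨k, (rfl | hk), hmem⟩)
      · exact Or.inl (Or.inl rfl)
      · exact Or.inr hmem
      · exact Or.inl (Or.inr ⟨k, hk, hmem⟩)
    · rintro ((rfl | ⟨k, hk, hmem⟩) | hmem)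
      · exact Or.inl rfl
      · exact Or.inr ⟨k, Or.inr hk, hmem⟩
      · exact Or.inr ⟨k₀, Or.inl rfl, hmem⟩
  have hsplit : ESet G B (S ∪ Br G k₀ c) y =
      (ESet G B S y ∪ ESet G B (Br G k₀ c) y) ∪
        (if y c = y k₀ then (∅ : Set (Sym2 V)) else {s(c, k₀)}) := by
    ext e
    induction e using Sym2.ind with
    | _ u w =>
      simp only [Set.mem_union]
      rw [mem_ESet_iff, mem_ESet_iff, mem_ESet_iff]
      constructor
      · rintro ⟨hadj, hB', ⟨hu, hw⟩, hodd⟩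
        -- classify
        by_cases huc : u = c
        · by_cases hwc : w = c
          · exact absurd ((huc.trans hwc.symm) ▸ hadj) (G.irrefl)
          · rcases hw with hw | hw
            · rcases Set.mem_insert_iff.mp hw with hwc2 | hw'
              · exact absurd hwc2 hwc
              · exact Or.inl (Or.inl ⟨hadj, hB', ⟨huc ▸ Set.mem_insert _ _,
                  Set.mem_insert_iff.mpr (Or.inr hw')⟩, hodd⟩)
            · have hwk : w = k₀ := eq_of_adj_mem_Br hG hk₀ (huc ▸ hadj.symm) hw
              right
              rw [if_neg (by rw [← huc, ← hwk]; exact hodd), Set.mem_singleton_iff, huc, hwk]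
        · by_cases hwc : w = c
          · rcases hu with hu | hu
            · rcases Set.mem_insert_iff.mp hu with huc2 | hu'
              · exact absurd huc2 huc
              · exact Or.inl (Or.inl ⟨hadj, hB', ⟨Set.mem_insert_iff.mpr (Or.inr hu'),
                  hwc ▸ Set.mem_insert _ _⟩, hodd⟩)
            · have huk : u = k₀ := eq_of_adj_mem_Br hG hk₀ (hwc ▸ hadj) hu
              right
              rw [if_neg (by rw [← huk, ← hwc]; exact fun hh => hodd hh.symm),
                Set.mem_singleton_iff, huk, hwc]
              exact Sym2.eq_swap
          · -- neither endpoint is c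
            have hu' : u ∈ SK G c K ∪ Br G k₀ c := by
              rcases hu with hu | hu
              · rcases Set.mem_insert_iff.mp hu with huc2 | hu'
                · exact absurd huc2 huc
                · exact Or.inl hu'
              · exact Or.inr hu
            rcases hu' with ⟨k', hk', hmem⟩ | hmem
            · have hwmem : w ∈ Br G k' c := edge_mem_Br hG hadj (hK k' hk') hmem hwc
              exact Or.inl (Or.inl ⟨hadj, hB',
                ⟨Set.mem_insert_iff.mpr (Or.inr ⟨k', hk', hmem⟩),
                 Set.mem_insert_iff.mpr (Or.inr ⟨k', hk', hwmem⟩)⟩, hodd⟩)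
            · have hwmem : w ∈ Br G k₀ c := edge_mem_Br hG hadj hk₀ hmem hwc
              exact Or.inl (Or.inr ⟨hadj, hB', ⟨hmem, hwmem⟩, hodd⟩)
      · rintro ((⟨hadj, hB', ⟨hu, hw⟩, hodd⟩ | ⟨hadj, hB', ⟨hu, hw⟩, hodd⟩) | he)
        · exact ⟨hadj, hB', ⟨Or.inl hu, Or.inl hw⟩, hodd⟩
        · exact ⟨hadj, hB', ⟨Or.inr hu, Or.inr hw⟩, hodd⟩
        · by_cases hyck : y c = y k₀
          · rw [if_pos hyck] at he; exact absurd he (Set.notMem_empty _)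
          · rw [if_neg hyck, Set.mem_singleton_iff] at he
            rw [Sym2.eq_iff] at he
            rcases he with ⟨rfl, rfl⟩ | ⟨rfl, rfl⟩
            · exact ⟨hk₀.symm, Or.inl hc,
                ⟨Or.inl (Set.mem_insert _ _), Or.inr (self_mem_Br hk₀)⟩, hyck⟩
            · exact ⟨hk₀, Or.inr hc,
                ⟨Or.inr (self_mem_Br hk₀), Or.inl (Set.mem_insert _ _)⟩,
                 by simpa [eq_comm] using hyck⟩
  have hd1 : Disjoint (ESet G B S y) (ESet G B (Br G k₀ c) y) := by
    rw [Set.disjoint_left]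
    intro e he he'
    induction e using Sym2.ind with
    | _ u w =>
      rw [mem_ESet_iff] at he he'
      exact not_mem_S_of_mem_Br hG hk₀ hK hk₀K he'.2.2.1.1 he.2.2.1.1
  have hd2 : Disjoint (ESet G B S y ∪ ESet G B (Br G k₀ c) y)
      (if y c = y k₀ then (∅ : Set (Sym2 V)) else {s(c, k₀)}) := by
    by_cases hyck : y c = y k₀
    · simp [hyck]
    · rw [if_neg hyck, Set.disjoint_right]
      intro e he
      rw [Set.mem_singleton_iff] at he
      subst he
      rintro (he | he) <;> rw [mem_ESet_iff] at he
      · -- k₀ ∈ S : contradiction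
        exact not_mem_S_of_mem_Br hG hk₀ hK hk₀K (self_mem_Br hk₀) he.2.2.1.2
      · exact center_not_mem_Br he.2.2.1.1
  unfold cost
  rw [hreg, hsplit, Set.ncard_union_eq hd2 (Set.toFinite _) (Set.toFinite _),
    Set.ncard_union_eq hd1 (Set.toFinite _) (Set.toFinite _)]
  by_cases hyck : y c = y k₀
  · simp [hyck]
  · simp [hyck]

lemma Br_B_disjoint (hG : G.IsTree) {B : Finset V} (hB : (G.induce (B : Set V)).Connected)
    {k c : V} (hkc : G.Adj k c) (hc : c ∈ B) (hk : k ∉ B) {v : V}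
    (hv : v ∈ Br G k c) : v ∉ B := by
  intro hvB
  obtain ⟨w⟩ := hB.preconnected ⟨v, hvB⟩ ⟨c, hc⟩
  let f : (G.induce (B : Set V)) →g G := ⟨Subtype.val, fun {a b} hab => hab⟩
  let p := (w.map f).bypass
  have hp : p.IsPath := Walk.bypass_isPath _
  have hsupp : ∀ a ∈ p.support, a ∈ B := by
    intro a ha
    have h1 := Walk.support_bypass_subset _ ha
    rw [Walk.support_map] at h1
    obtain ⟨b, _, rfl⟩ := List.mem_map.mp h1
    exact b.2
  have hk' : k ∈ p.support := by
    rw [eq_upath hG p hp]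
    exact (mem_Br_iff_mem_support hG hkc).mp hv
  exact hk (hsupp k hk')


/-! ### Admissible configurations and local minima -/

def admis (B : Finset V) (x : V → ℤ) (y : V → ℤ) : Prop :=
  (∀ v, v ∉ B → y v = x v) ∧ (∀ v ∈ B, y v = 1 ∨ y v = -1)

noncomputable def Nf (G : SimpleGraph V) (B : Finset V) (x : V → ℤ)
    (S : Set V) (j : V) (s : ℤ) : ℕ :=
  sInf {n | ∃ y : V → ℤ, admis B x y ∧ y j = s ∧ cost G B S y = n}

lemma Nf_nonempty {B : Finset V} {x : V → ℤ} {S : Set V} {c : V} {s : ℤ}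
    (hc : c ∈ B) (hs : s = 1 ∨ s = -1) :
    {n | ∃ y : V → ℤ, admis B x y ∧ y c = s ∧ cost G B S y = n}.Nonempty := by
  classical
  refine ⟨_, fun v => if v ∈ B then (if v = c then s else 1) else x v, ⟨?_, ?_⟩, ?_, rfl⟩
  · intro v hv; simp [hv]
  · intro v hv
    simp only [hv, if_true, if_pos]
    by_cases hvc : v = c
    · simpa [hvc] using hs
    · simp [hvc]
  · simp [hc]

lemma Nf_le {B : Finset V} {x : V → ℤ} {S : Set V} {c : V} {s : ℤ} {y : V → ℤ}
    (hadm : admis B x y) (hyc : y c = s) : Nf G B x S c s ≤ cost G B S y :=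
  Nat.sInf_le ⟨y, hadm, hyc, rfl⟩

lemma Nf_spec {B : Finset V} {x : V → ℤ} {S : Set V} {c : V} {s : ℤ}
    (hc : c ∈ B) (hs : s = 1 ∨ s = -1) :
    ∃ y : V → ℤ, admis B x y ∧ y c = s ∧ cost G B S y = Nf G B x S c s :=
  Nat.sInf_mem (Nf_nonempty hc hs)

noncomputable def Wmin (G : SimpleGraph V) (B : Finset V) (x : V → ℤ)
    (c : V) (s : ℤ) (k : V) : ℕ :=
  if k ∈ B then min (Nf G B x (Br G k c) k s) (Nf G B x (Br G k c) k (-s) + 1)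
  else (if x k = s then 0 else 1)

lemma D2 (hG : G.IsTree) {B : Finset V} (hB : (G.induce (B : Set V)).Connected)
    {x : V → ℤ} {c : V} (hc : c ∈ B) {s : ℤ} (hs : s = 1 ∨ s = -1)
    (K : Finset V) (hK : ∀ k ∈ K, G.Adj k c) :
    Nf G B x (insert c (SK G c K)) c s = ∑ k ∈ K, Wmin G B x c s k := by
  classical
  induction K using Finset.induction_on with
  | empty =>
    have hSK : SK G c (∅ : Finset V) = (∅ : Set V) := by simp [SK]
    have hins : insert c (∅ : Set V) = {c} := by simp
    rw [hSK, Finset.sum_empty, hins]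
    refine Nat.le_antisymm ?_ (Nat.zero_le _)
    obtain ⟨y, hadm, hyc, _⟩ := Nf_spec (G := G) (B := B) (x := x)
      (S := ({c} : Set V)) hc hs
    have h := Nf_le (G := G) (S := ({c} : Set V)) hadm hyc
    rwa [cost_singleton] at h
  | @insert k₀ K hk₀K IH =>
    have hk₀c : G.Adj k₀ c := hK k₀ (Finset.mem_insert_self _ _)
    have hK' : ∀ k ∈ K, G.Adj k c := fun k hk => hK k (Finset.mem_insert_of_mem hk)
    rw [Finset.sum_insert hk₀K, ← IH hK']
    have hsne : s ≠ -s := by rcases hs with rfl | rfl <;> decide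
    obtain ⟨y₁, hadm₁, hy₁, hcost₁⟩ := Nf_spec (G := G) (B := B) (x := x)
      (S := insert c (SK G c K)) hc hs
    apply le_antisymm
    · -- construct glued configuration
      by_cases hk₀B : k₀ ∈ B
      · set t : ℤ := if Nf G B x (Br G k₀ c) k₀ s ≤ Nf G B x (Br G k₀ c) k₀ (-s) + 1
          then s else -s with ht_def
        have ht : t = 1 ∨ t = -1 := by
          rcases hs with rfl | rfl <;> rw [ht_def] <;> split <;> simp
        obtain ⟨y₂, hadm₂, hy₂, hcost₂⟩ := Nf_spec (G := G) (B := B) (x := x)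
          (S := Br G k₀ c) hk₀B ht
        set y : V → ℤ := fun v => if v ∈ Br G k₀ c then y₂ v else y₁ v with hy_def
        have hadm : admis B x y := by
          constructor
          · intro v hv
            simp only [hy_def]
            by_cases hmem : v ∈ Br G k₀ c
            · rw [if_pos hmem]; exact hadm₂.1 v hv
            · rw [if_neg hmem]; exact hadm₁.1 v hv
          · intro v hv
            simp only [hy_def]
            by_cases hmem : v ∈ Br G k₀ c
            · rw [if_pos hmem]; exact hadm₂.2 v hv
            · rw [if_neg hmem]; exact hadm₁.2 v hv
        have hyc : y c = s := by
          simp only [hy_def]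
          rw [if_neg (center_not_mem_Br (G := G) (k := k₀) (j := c))]
          exact hy₁
        have key := Nf_le (G := G) (S := insert c (SK G c (insert k₀ K))) hadm hyc
        rw [CP hG hc hk₀c K hK' hk₀K y] at key
        have e1 : cost G B (insert c (SK G c K)) y = cost G B (insert c (SK G c K)) y₁ :=
          cost_congr (fun v hv => by
            simp only [hy_def]
            rw [if_neg (fun hmem => not_mem_S_of_mem_Br hG hk₀c hK' hk₀K hmem hv)])
        have e2 : cost G B (Br G k₀ c) y = cost G B (Br G k₀ c) y₂ :=
          cost_congr (fun v hv => by simp only [hy_def]; rw [if_pos hv])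
        have e3 : y k₀ = t := by
          simp only [hy_def]
          rw [if_pos (self_mem_Br hk₀c)]
          exact hy₂
        rw [e1, e2, hcost₁, hcost₂, e3, hyc] at key
        have e4 : Nf G B x (Br G k₀ c) k₀ t + (if s = t then 0 else 1)
            = Wmin G B x c s k₀ := by
          rw [Wmin, if_pos hk₀B]
          by_cases hmin : Nf G B x (Br G k₀ c) k₀ s ≤ Nf G B x (Br G k₀ c) k₀ (-s) + 1
          · rw [ht_def, if_pos hmin, if_pos rfl, min_eq_left hmin]
            omega
          · rw [ht_def, if_neg hmin, if_neg hsne,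
              min_eq_right (le_of_not_ge hmin)]
        omega
      · set y : V → ℤ := fun v => if v ∈ Br G k₀ c then x v else y₁ v with hy_def
        have hBdisj : ∀ v ∈ Br G k₀ c, v ∉ B := fun v hv =>
          Br_B_disjoint hG hB hk₀c hc hk₀B hv
        have hadm : admis B x y := by
          constructor
          · intro v hv
            simp only [hy_def]
            by_cases hmem : v ∈ Br G k₀ c
            · rw [if_pos hmem]
            · rw [if_neg hmem]; exact hadm₁.1 v hv
          · intro v hv
            simp only [hy_def]
            rw [if_neg (fun hmem => hBdisj v hmem hv)]
            exact hadm₁.2 v hv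
        have hyc : y c = s := by
          simp only [hy_def]
          rw [if_neg (center_not_mem_Br (G := G) (k := k₀) (j := c))]
          exact hy₁
        have key := Nf_le (G := G) (S := insert c (SK G c (insert k₀ K))) hadm hyc
        rw [CP hG hc hk₀c K hK' hk₀K y] at key
        have e1 : cost G B (insert c (SK G c K)) y = cost G B (insert c (SK G c K)) y₁ :=
          cost_congr (fun v hv => by
            simp only [hy_def]
            rw [if_neg (fun hmem => not_mem_S_of_mem_Br hG hk₀c hK' hk₀K hmem hv)])
        have e2 : cost G B (Br G k₀ c) y = 0 := cost_eq_zero_of_not_B hBdisj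
        have e3 : y k₀ = x k₀ := by
          simp only [hy_def]
          rw [if_pos (self_mem_Br hk₀c)]
        have e4 : (if y c = y k₀ then 0 else 1) ≤ Wmin G B x c s k₀ := by
          rw [hyc, e3, Wmin, if_neg hk₀B]
          by_cases hxk : x k₀ = s
          · simp [hxk]
          · rw [if_neg hxk, if_neg (fun h => hxk h.symm)]
        rw [e1, e2, hcost₁] at key
        omega
    · -- lower bound
      obtain ⟨y, hadm, hyc, hcost⟩ := Nf_spec (G := G) (B := B) (x := x)
        (S := insert c (SK G c (insert k₀ K))) hc hs
      rw [← hcost, CP hG hc hk₀c K hK' hk₀K y]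
      have h1 : Nf G B x (insert c (SK G c K)) c s ≤ cost G B (insert c (SK G c K)) y :=
        Nf_le hadm hyc
      have h2 : Wmin G B x c s k₀ ≤ cost G B (Br G k₀ c) y +
          (if y c = y k₀ then 0 else 1) := by
        by_cases hk₀B : k₀ ∈ B
        · rw [Wmin, if_pos hk₀B]
          have hyk : y k₀ = s ∨ y k₀ = -s := by
            rcases hadm.2 k₀ hk₀B with h | h <;> rcases hs with rfl | rfl <;> simp [h]
          rcases hyk with hyk | hyk
          · have := Nf_le (G := G) (S := Br G k₀ c) hadm hyk
            calc min (Nf G B x (Br G k₀ c) k₀ s) (Nf G B x (Br G k₀ c) k₀ (-s) + 1)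
                ≤ Nf G B x (Br G k₀ c) k₀ s := min_le_left _ _
              _ ≤ cost G B (Br G k₀ c) y := this
              _ ≤ _ := Nat.le_add_right _ _
          · have hle := Nf_le (G := G) (S := Br G k₀ c) hadm hyk
            have hind : (if y c = y k₀ then 0 else 1) = 1 := by
              rw [if_neg]
              rw [hyc, hyk]
              exact hsne
            rw [hind]
            calc min (Nf G B x (Br G k₀ c) k₀ s) (Nf G B x (Br G k₀ c) k₀ (-s) + 1)
                ≤ Nf G B x (Br G k₀ c) k₀ (-s) + 1 := min_le_right _ _
              _ ≤ cost G B (Br G k₀ c) y + 1 := by omega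
        · rw [Wmin, if_neg hk₀B]
          have hyk : y k₀ = x k₀ := hadm.1 k₀ hk₀B
          by_cases hxk : x k₀ = s
          · simp [hxk]
          · rw [if_neg hxk]
            have hind : (if y c = y k₀ then 0 else 1) = 1 := by
              rw [if_neg]
              rw [hyc, hyk]
              exact fun h => hxk h.symm
            omega
      omega

/-! ### Connectivity of B keeps branches beyond the boundary free of B -/

/-! ### OstarT in terms of Nf -/

lemma oddBondsT_eq {B : Finset V} (y : V → ℤ) :
    oddBondsT G B y = cost G B Set.univ y := by
  unfold oddBondsT cost
  congr 1
  ext e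
  simp [ESet]

lemma OstarT_eq {B : Finset V} {x : V → ℤ} (i : V) (s : ℤ) :
    OstarT G B x i s = Nf G B x Set.univ i s := by
  unfold OstarT Nf
  congr 1
  ext n
  constructor
  · rintro ⟨y, h1, h2, h3, h4⟩
    exact ⟨y, ⟨h1, h2⟩, h3, by rw [← oddBondsT_eq]; exact h4⟩
  · rintro ⟨y, ⟨h1, h2⟩, h3, h4⟩
    exact ⟨y, h1, h2, h3, by rw [oddBondsT_eq]; exact h4⟩

/-! ### sign arithmetic -/

lemma AR1 (a b : ℕ) :
    ((a : ℤ) ⊓ ((b : ℤ) + 1)) - ((b : ℤ) ⊓ ((a : ℤ) + 1)) = ((a : ℤ) - b).sign := by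
  rcases lt_trichotomy a b with h | h | h
  · rw [min_eq_left (by push_cast; omega), min_eq_right (by push_cast; omega),
      Int.sign_eq_neg_one_of_neg (by push_cast; omega)]
    push_cast; omega
  · subst h
    rw [min_eq_left (by push_cast; omega)]
    simp
  · rw [min_eq_right (by push_cast; omega), min_eq_left (by push_cast; omega),
      Int.sign_eq_one_of_pos (by push_cast; omega)]
    push_cast; omega

noncomputable def climit (G : SimpleGraph V) (B : Finset V) (x : V → ℤ) (k j : V) : ℤ :=
  if k ∈ B then
    ((Nf G B x (Br G k j) k (-1) : ℤ) - (Nf G B x (Br G k j) k 1 : ℤ)).sign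
  else x k

lemma Wsub {B : Finset V} {x : V → ℤ} (hx : ∀ j, j ∉ B → x j = 1 ∨ x j = -1) (c k : V) :
    (Wmin G B x c (-1) k : ℤ) - (Wmin G B x c 1 k : ℤ) = climit G B x k c := by
  by_cases hkB : k ∈ B
  · simp only [Wmin, if_pos hkB, climit]
    rw [show (-(-1) : ℤ) = 1 by norm_num, show (-(1) : ℤ) = -1 by norm_num]
    push_cast
    exact AR1 _ _
  · simp only [Wmin, if_neg hkB, climit]
    rcases hx k hkB with h | h <;> simp [h]

/-! ### Heights -/

open Classical in
noncomputable def hgt (G : SimpleGraph V) (k j : V) : ℕ :=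
  Finset.univ.sup fun v => if v ∈ Br G k j then G.dist v k else 0

lemma le_hgt {k j v : V} (hv : v ∈ Br G k j) : G.dist v k ≤ hgt G k j := by
  classical
  unfold hgt
  have h := Finset.le_sup (f := fun v => if v ∈ Br G k j then G.dist v k else 0)
    (Finset.mem_univ v)
  rwa [if_pos hv] at h

lemma hgt_le {k j : V} {m : ℕ} (h : ∀ v ∈ Br G k j, G.dist v k ≤ m) : hgt G k j ≤ m := by
  classical
  unfold hgt
  apply Finset.sup_le
  intro v _
  split
  · exact h v ‹_›
  · omega

lemma hgt_step (hG : G.IsTree) {k j k' : V} (hkj : G.Adj k j) (hk'k : G.Adj k' k)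
    (hne : k' ≠ j) : hgt G k' k + 1 ≤ hgt G k j := by
  have h1 : 1 ≤ hgt G k j := by
    have hm : k' ∈ Br G k' k := self_mem_Br hk'k
    have hsub := Br_subset hG hkj hk'k hne hm
    have h := le_hgt hsub
    rwa [dist_eq_one_iff_adj.mpr hk'k] at h
  have h2 : hgt G k' k ≤ hgt G k j - 1 := by
    apply hgt_le
    intro v hv
    have hd : G.dist v k = G.dist v k' + 1 := (mem_Br_iff hG hk'k).mp hv
    have hle := le_hgt (Br_subset hG hkj hk'k hne hv)
    omega
  omega

lemma hgt_le_diam (hG : G.IsTree) (htop : G.ediam ≠ ⊤) {k j : V} (hkj : G.Adj k j) :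
    hgt G k j + 1 ≤ G.diam := by
  have hd1 : 1 ≤ G.diam := by
    have h := G.dist_le_diam htop (u := k) (v := j)
    rwa [dist_eq_one_iff_adj.mpr hkj] at h
  have h2 : hgt G k j ≤ G.diam - 1 := by
    apply hgt_le
    intro v hv
    have hd : G.dist v j = G.dist v k + 1 := (mem_Br_iff hG hkj).mp hv
    have h := G.dist_le_diam htop (u := v) (v := j)
    omega
  omega

end Aux

/-- Tree convergence: on a finite tree with a subtree interior `B` and any boundary
configuration, the difference messages are eventually constant and the estimates
`ô^n_i = Σ_{j ∈ ∂i} m^n_{j→i}` equal the local solutions `o*_i = O*_i(-1) - O*_i(+1)`,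
within a number of iterations equal to the diameter of the tree plus 1. -/
theorem tree_convergence
    (G : SimpleGraph V) [DecidableRel G.Adj] (htree : G.IsTree)
    (B : Finset V) (hB : (G.induce (B : Set V)).Connected)
    (x : V → ℤ) (hx : ∀ j, j ∉ B → x j = 1 ∨ x j = -1)
    (m : ℕ → V → V → ℤ)
    (hbd : ∀ j, j ∉ B → ∀ i, ∀ n : ℕ, m n j i = x j)
    (h0 : ∀ j ∈ B, ∀ i, m 0 j i = 0)
    (hup : ∀ j ∈ B, ∀ i, ∀ n : ℕ, 0 < n →
      m n j i = Int.sign (∑ k ∈ G.neighborFinset j \ {i}, m (n-1) k j)) :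
    (∀ j i : V, ∀ n : ℕ, G.diam + 1 ≤ n → m n j i = m (G.diam + 1) j i) ∧
    (∀ i ∈ B, ∀ n : ℕ, G.diam + 1 ≤ n →
      ∑ j ∈ G.neighborFinset i, m n j i =
        (OstarT G B x i (-1) : ℤ) - (OstarT G B x i 1 : ℤ)) := by
  classical
  have hconn := htree.isConnected
  have hne : Nonempty V := hconn.nonempty
  have htop : G.ediam ≠ ⊤ := by
    obtain ⟨u, v, huv⟩ := G.exists_edist_eq_ediam_of_finite
    rw [← huv]
    exact SimpleGraph.edist_ne_top_iff_reachable.mpr (hconn u v)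
  have C2 : ∀ k j : V, G.Adj k j → k ∈ B →
      ((Nf G B x (Br G k j) k (-1) : ℤ) - (Nf G B x (Br G k j) k 1 : ℤ))
        = ∑ k' ∈ G.neighborFinset k \ {j}, climit G B x k' k := by
    intro k j hkj hkB
    have hKadj : ∀ k' ∈ G.neighborFinset k \ {j}, G.Adj k' k := by
      intro k' hk'
      rw [Finset.mem_sdiff, SimpleGraph.mem_neighborFinset] at hk'
      exact hk'.1.symm
    have h1 := D2 htree hB (x := x) hkB (Or.inl rfl) _ hKadj
    have h2 := D2 htree hB (x := x) hkB (Or.inr rfl) _ hKadj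
    rw [← branch_decomp htree hkj] at h1 h2
    rw [h1, h2]
    push_cast
    rw [← Finset.sum_sub_distrib]
    exact Finset.sum_congr rfl fun k' _ => Wsub hx k k'
  have C1 : ∀ h : ℕ, ∀ k j : V, G.Adj k j → k ∈ B → hgt G k j ≤ h →
      ∀ n : ℕ, h + 1 ≤ n → m n k j = climit G B x k j := by
    intro h
    induction h using Nat.strong_induction_on with
    | _ h IH =>
      intro k j hkj hkB hh n hn
      rw [hup k hkB j n (by omega)]
      have hsum : ∑ k' ∈ G.neighborFinset k \ {j}, m (n-1) k' k
          = ∑ k' ∈ G.neighborFinset k \ {j}, climit G B x k' k := by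
        refine Finset.sum_congr rfl fun k' hk' => ?_
        rw [Finset.mem_sdiff, SimpleGraph.mem_neighborFinset, Finset.mem_singleton] at hk'
        have hk'k : G.Adj k' k := hk'.1.symm
        by_cases hk'B : k' ∈ B
        · have hstep := hgt_step htree hkj hk'k hk'.2
          exact IH (hgt G k' k) (by omega) k' k hk'k hk'B le_rfl (n-1) (by omega)
        · rw [hbd k' hk'B k (n-1), climit, if_neg hk'B]
      rw [hsum, ← C2 k j hkj hkB]
      simp only [climit, if_pos hkB]
  refine ⟨?_, ?_⟩
  · intro j i n hn
    by_cases hjB : j ∈ B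
    · rw [hup j hjB i n (by omega), hup j hjB i (G.diam+1) (by omega)]
      congr 1
      refine Finset.sum_congr rfl fun k hk => ?_
      rw [Finset.mem_sdiff, SimpleGraph.mem_neighborFinset, Finset.mem_singleton] at hk
      have hkj : G.Adj k j := hk.1.symm
      by_cases hkB : k ∈ B
      · have hhd := hgt_le_diam htree htop hkj
        rw [C1 (hgt G k j) k j hkj hkB le_rfl (n-1) (by omega),
            C1 (hgt G k j) k j hkj hkB le_rfl (G.diam+1-1) (by omega)]
      · rw [hbd k hkB j (n-1), hbd k hkB j (G.diam+1-1)]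
    · rw [hbd j hjB i n, hbd j hjB i (G.diam+1)]
  · intro i hiB n hn
    have hsum : ∑ j ∈ G.neighborFinset i, m n j i
        = ∑ j ∈ G.neighborFinset i, climit G B x j i := by
      refine Finset.sum_congr rfl fun j hj => ?_
      rw [SimpleGraph.mem_neighborFinset] at hj
      have hji : G.Adj j i := hj.symm
      by_cases hjB : j ∈ B
      · exact C1 (hgt G j i) j i hji hjB le_rfl n
          (by have := hgt_le_diam htree htop hji; omega)
      · rw [hbd j hjB i n, climit, if_neg hjB]
    rw [hsum, OstarT_eq, OstarT_eq]
    have hKadj : ∀ k ∈ G.neighborFinset i, G.Adj k i := by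
      intro k hk
      rw [SimpleGraph.mem_neighborFinset] at hk
      exact hk.symm
    have h1 := D2 htree hB (x := x) hiB (Or.inl rfl) (G.neighborFinset i) hKadj
    have h2 := D2 htree hB (x := x) hiB (Or.inr rfl) (G.neighborFinset i) hKadj
    rw [← univ_decomp htree i] at h1 h2
    rw [h1, h2]
    push_cast
    rw [← Finset.sum_sub_distrib]
    exact Finset.sum_congr rfl fun j _ => (Wsub hx i j).symm
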